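/- Postponement of structural equivalence: let → be a binary relation on a set and ≡ an equivalence relation that is a strong bisimulation with respect to → (i.e., t ≡ u and t → t' implies there exists u' with u → u' and t' ≡ u'). If t (→ ∪ ≡)* u via a sequence containing exactly n →-steps, then there exists w such that t →ⁿ w and w ≡ u. -/
import Mathlib


/-- A chain t (→ ∪ ≡)* u containing exactly n →-steps: `Chain r e n t u`. -/
inductive Chain {X : Type*} (r e : X → X → Prop) : ℕ → X → X → Prop
  | refl : ∀ x, Chain r e 0 x x
  | stepR : ∀ {x y z : X} {n : ℕ}, r x y → Chain r e n y z → Chain r e (n+1) x z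
  | stepE : ∀ {x y z : X} {n : ℕ}, e x y → Chain r e n y z → Chain r e n x z

/-- Exactly n →-steps. -/
def IterR {X : Type*} (r : X → X → Prop) : ℕ → X → X → Prop
  | 0, t, u => t = u
  | n+1, t, u => ∃ w, r t w ∧ IterR r n w u


theorem iter_lift {X : Type*} (r e : X → X → Prop)
    (he : Equivalence e)
    (hbisim : ∀ t u t', e t u → r t t' → ∃ u', r u u' ∧ e t' u') :
    ∀ n (y w x : X), IterR r n y w → e x y → ∃ w', IterR r n x w' ∧ e w' w := by
  intro n
  induction n with
  | zero => intro y w x hyw hxy; exact ⟨x, rfl, hyw ▸ hxy⟩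
  | succ m ih =>
    intro y w x hyw hxy
    obtain ⟨y1, hry, hyw⟩ := hyw
    obtain ⟨x1, hrx, hey⟩ := hbisim y x y1 (he.symm hxy) hry
    obtain ⟨w', hiter, hew⟩ := ih y1 w x1 hyw (he.symm hey)
    exact ⟨w', ⟨x1, hrx, hiter⟩, hew⟩

/-- postponement of structural equivalence: if ≡ is an equivalence
relation that is a strong bisimulation with respect to →, and t (→ ∪ ≡)* u with
exactly n →-steps, then there is w with t →ⁿ w and w ≡ u. -/
theorem postponement {X : Type*} (r e : X → X → Prop)
    (he : Equivalence e)
    (hbisim : ∀ t u t', e t u → r t t' → ∃ u', r u u' ∧ e t' u')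
    {n : ℕ} {t u : X} (h : Chain r e n t u) :
    ∃ w, IterR r n t w ∧ e w u := by
  induction h with
  | refl x => exact ⟨x, rfl, he.refl x⟩
  | stepR hr _ ih => obtain ⟨w, hi, hw⟩ := ih; exact ⟨w, ⟨_, hr, hi⟩, hw⟩
  | stepE hxy _ ih =>
    obtain ⟨w, hi, hw⟩ := ih
    obtain ⟨w', hi', hw'⟩ := iter_lift r e he hbisim _ _ w _ hi hxy
    exact ⟨w', hi', he.trans hw' hw⟩
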